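/- Solvability of the first two trapping inequalities: given constants L > 0, exponents p, q > 1, γ₁ ∈ [0, p−1), δ₂ ∈ [0, q−1), η₁ ∈ [0, q−1), η₂ ∈ [0, p−1) satisfying η₁ η₂ < (p−1)(q−1), there exist A₁, A₂ > 0 such that A₁^{p−1} ≥ L(1 + A₁^{γ₁} + A₂^{η₁}) and A₂^{q−1} ≥ L(1 + A₁^{η₂} + A₂^{δ₂}). -/
import Mathlib


/-- Solvability of the first two trapping inequalities. -/
theorem trapping_inequalities_solvable
    (p q L γ₁ δ₂ η₁ η₂ : ℝ) (hp : 1 < p) (hq : 1 < q) (hL : 0 < L)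
    (hγ₁ : 0 ≤ γ₁) (hγ₁' : γ₁ < p - 1)
    (hδ₂ : 0 ≤ δ₂) (hδ₂' : δ₂ < q - 1)
    (hη₁ : 0 ≤ η₁) (hη₁' : η₁ < q - 1)
    (hη₂ : 0 ≤ η₂) (hη₂' : η₂ < p - 1)
    (hmix : η₁ * η₂ < (p - 1) * (q - 1)) :
    ∃ A₁ A₂ : ℝ, 0 < A₁ ∧ 0 < A₂ ∧
      L * (1 + A₁ ^ γ₁ + A₂ ^ η₁) ≤ A₁ ^ (p - 1) ∧
      L * (1 + A₁ ^ η₂ + A₂ ^ δ₂) ≤ A₂ ^ (q - 1) := by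
  have hp1 : 0 < p - 1 := by linarith
  have hq1 : 0 < q - 1 := by linarith
  set s := (p - 1) * (q - 1) with hs
  have hs0 : 0 < s := mul_pos hp1 hq1
  set ε := min (min (s - (q-1)*γ₁) (s - (p-1)*η₁))
      (min (min (s - (q-1)*η₂) (s - (p-1)*δ₂)) s) with hεdef
  have hε0 : 0 < ε := by
    refine lt_min (lt_min ?_ ?_) (lt_min (lt_min ?_ ?_) hs0) <;> nlinarith
  have hε1 : ε ≤ s - (q-1)*γ₁ := (min_le_left _ _).trans (min_le_left _ _)
  have hε2 : ε ≤ s - (p-1)*η₁ := (min_le_left _ _).trans (min_le_right _ _)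
  have hε3 : ε ≤ s - (q-1)*η₂ :=
    (min_le_right _ _).trans ((min_le_left _ _).trans (min_le_left _ _))
  have hε4 : ε ≤ s - (p-1)*δ₂ :=
    (min_le_right _ _).trans ((min_le_left _ _).trans (min_le_right _ _))
  have hε5 : ε ≤ s := (min_le_right _ _).trans (min_le_right _ _)
  set T := max 1 ((3*L) ^ (1/ε)) with hTdef
  have hT1 : (1:ℝ) ≤ T := le_max_left _ _
  have hT0 : (0:ℝ) < T := lt_of_lt_of_le one_pos hT1
  have h3L : 3*L ≤ T ^ ε := by
    have h : (3*L) ^ (1/ε) ≤ T := le_max_right _ _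
    calc 3*L = ((3*L) ^ (1/ε)) ^ ε := by
          rw [← Real.rpow_mul (by positivity), one_div_mul_cancel hε0.ne',
            Real.rpow_one]
      _ ≤ T ^ ε := Real.rpow_le_rpow (by positivity) h hε0.le
  have key : ∀ e : ℝ, e + ε ≤ s → L * T ^ e ≤ T ^ s / 3 := by
    intro e he
    have h1 : T ^ (e + ε) ≤ T ^ s := Real.rpow_le_rpow_of_exponent_le hT1 he
    rw [Real.rpow_add hT0] at h1
    have hTe : 0 < T ^ e := Real.rpow_pos_of_pos hT0 e
    nlinarith [mul_le_mul_of_nonneg_left h3L hTe.le]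
  have k0 := key 0 (by linarith)
  rw [Real.rpow_zero] at k0
  refine ⟨T ^ (q-1), T ^ (p-1), Real.rpow_pos_of_pos hT0 _,
    Real.rpow_pos_of_pos hT0 _, ?_, ?_⟩
  · have k1 := key ((q-1)*γ₁) (by linarith)
    have k2 := key ((p-1)*η₁) (by linarith)
    rw [← Real.rpow_mul hT0.le, ← Real.rpow_mul hT0.le, ← Real.rpow_mul hT0.le]
    have hrw : (q-1)*(p-1) = s := by rw [hs]; ring
    rw [hrw]
    linarith
  · have k1 := key ((q-1)*η₂) (by linarith)
    have k2 := key ((p-1)*δ₂) (by linarith)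
    rw [← Real.rpow_mul hT0.le, ← Real.rpow_mul hT0.le, ← Real.rpow_mul hT0.le]
    have hrw : (p-1)*(q-1) = s := hs.symm
    rw [hrw]
    linarith
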